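/- arXiv:2107.00775 — 5 statements merged into one kernel-verified Lean document; each statement's English description precedes it below -/
import Mathlib

section
/- Let A be a finite-dimensional unital associative algebra over a field with Jacobson radical R, let (e,f) be a strict idempotent pair in A and (e',f') an idempotent pair in A, and suppose eAf ⊆ e'Af'. Then there exists a strict idempotent pair (e'',f'') in A such that e'e'' = e''e' = e'', f'f'' = f''f' = f'', and e''Af'' = eAf. -/
namespace Paper

variable (F A : Type*) [Field F] [Ring A] [Algebra F A]

/-- The derived series `A⁽ᵏ⁾` of the Lie algebra `A⁽⁻⁾` (as subspaces of `A`). -/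
def derivedSeries : ℕ → Submodule F A
  | 0 => ⊤
  | (k+1) => Submodule.span F
      {z : A | ∃ x ∈ derivedSeries k, ∃ y ∈ derivedSeries k, z = ⁅x, y⁆}

variable {F A}

/-- `B` is an inner ideal of the Lie algebra given by the subspace `L` of `A⁽⁻⁾`. -/
def IsInnerIdeal (L B : Submodule F A) : Prop :=
  B ≤ L ∧ ∀ b ∈ B, ∀ b' ∈ B, ∀ x ∈ L, ⁅b, ⁅b', x⁆⁆ ∈ B

/-- `B` is a Jordan-Lie inner ideal of `L`. -/
def IsJordanLie (L B : Submodule F A) : Prop :=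
  IsInnerIdeal L B ∧ ∀ b ∈ B, ∀ b' ∈ B, b * b' = 0

/-- Jacobson radical of `A` as an `F`-subspace. -/
noncomputable def radical : Submodule F A :=
  (Ideal.jacobson (⊥ : Ideal A)).restrictScalars F

/-- The Jacobson radical of a subalgebra `A'`, as a subset of `A`. -/
def subalgRad (A' : Subalgebra F A) : Set A :=
  Subtype.val '' ((Ideal.jacobson (⊥ : Ideal A')) : Set A')

/-- `c` represents a central idempotent of the quotient of the
(sub)algebra with carrier `S` by the ideal with carrier `ρ`. -/
def IsCentralIdempotentMod (S ρ : Set A) (c : A) : Prop :=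
  c ∈ S ∧ (∀ a ∈ S, c * a - a * c ∈ ρ) ∧ c * c - c ∈ ρ

/-- `c` represents a primitive central idempotent of the quotient mod `ρ`. -/
def IsPrimitiveCentralIdempotentMod (S ρ : Set A) (c : A) : Prop :=
  IsCentralIdempotentMod S ρ c ∧ c ∉ ρ ∧
    ¬ ∃ c₁ c₂ : A, IsCentralIdempotentMod S ρ c₁ ∧ IsCentralIdempotentMod S ρ c₂ ∧
      c₁ ∉ ρ ∧ c₂ ∉ ρ ∧ c₁ * c₂ ∈ ρ ∧ c₂ * c₁ ∈ ρ ∧ c - (c₁ + c₂) ∈ ρ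

/-- The idempotent pair `(e, f)` is strict w.r.t. the quotient mod `ρ`:
for every primitive central idempotent `c` of the quotient, `c·ē = 0 ↔ c·f̄ = 0`. -/
def IsStrictPairMod (S ρ : Set A) (e f : A) : Prop :=
  ∀ c : A, IsPrimitiveCentralIdempotentMod S ρ c → (c * e ∈ ρ ↔ c * f ∈ ρ)

/-- `(e,f)` is a strict idempotent pair of `A` (strictness w.r.t. `A/rad A`). -/
def IsStrictPair (e f : A) : Prop :=
  e * e = e ∧ f * f = f ∧
    IsStrictPairMod Set.univ ((Ideal.jacobson (⊥ : Ideal A)) : Set A) e f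

/-- `J` is a two-sided ideal of the (possibly non-unital) algebra `P`. -/
def IsTwoSidedIdealIn (P J : Submodule F A) : Prop :=
  J ≤ P ∧ ∀ p ∈ P, ∀ x ∈ J, p * x ∈ J ∧ x * p ∈ J

/-- The algebra with carrier `P` is 1-perfect: it has no two-sided ideals of
codimension 1. -/
def IsOnePerfect (P : Submodule F A) : Prop :=
  ¬ ∃ J : Submodule F A, IsTwoSidedIdealIn P J ∧
      Module.finrank F P = Module.finrank F J + 1

/-!
In the semisimple ring `Ā = A / R` every two-sided ideal is generated by a central idempotent,
and an element killed by all primitive central idempotents is zero. Since `eAf ⊆ e'Af'`, the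
element `ē - ē'ē` annihilates `Ā f̄` from the left. A primitive central idempotent `c` either
kills `f̄`, hence `ē` by strictness, or lies outside the annihilator ideal of `Ā f̄`; in both
cases it kills `ē - ē'ē`. So `ē'ē = ē`, and symmetrically `f̄f̄' = f̄`. Then `e'ee'` and
`f'ff'` are idempotent modulo the nilpotent ideal `R`, and a polynomial lift without constant
term gives idempotents `e'' ∈ e'Ae'`, `f'' ∈ f'Af'` with `ē'' = ēē'` and `f̄'' = f̄'f̄`. These
are still strict, and `e''Af'' = eAf` because the lift fixes everything that `e'ee'` fixes.
-/

section CentralIdempotent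

variable {R : Type*} [Ring R]

def IsCentralIdempotent (c : R) : Prop :=
  IsIdempotentElem c ∧ ∀ a, c * a = a * c

def IsPrimitiveCentralIdempotent (c : R) : Prop :=
  IsCentralIdempotent c ∧ c ≠ 0 ∧ ∀ z, IsCentralIdempotent z → c * z = z → z = 0 ∨ z = c

theorem IsCentralIdempotent.mul {c d : R} (hc : IsCentralIdempotent c)
    (hd : IsCentralIdempotent d) : IsCentralIdempotent (c * d) :=
  ⟨hc.1.mul_of_commute (hc.2 d) hd.1, fun a => by rw [mul_assoc, hd.2, ← mul_assoc, hc.2,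
    mul_assoc]⟩

theorem IsCentralIdempotent.one_sub {c : R} (hc : IsCentralIdempotent c) :
    IsCentralIdempotent (1 - c) :=
  ⟨hc.1.one_sub, fun a => by rw [sub_mul, mul_sub, hc.2, one_mul, mul_one]⟩

theorem IsCentralIdempotent.exists_isPrimitiveCentralIdempotent_mul_eq [IsArtinianRing R]
    {z : R} (hz : IsCentralIdempotent z) (hz0 : z ≠ 0) :
    ∃ c, IsPrimitiveCentralIdempotent c ∧ c * z = c := by
  obtain ⟨d, ⟨hd, hd0, hdz⟩, hmin⟩ :=
    (InvImage.wf (fun d : R => Ideal.span {d}) wellFounded_lt).has_min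
      {d | IsCentralIdempotent d ∧ d ≠ 0 ∧ d * z = d} ⟨z, hz, hz0, hz.1.eq⟩
  refine ⟨d, ⟨hd, hd0, fun y hy hdy => or_iff_not_imp_left.2 fun hy0 => ?_⟩, hdz⟩
  have hyd : y * d = y := by rw [hy.2, hdy]
  have hle : Ideal.span {y} ≤ Ideal.span {d} :=
    Ideal.span_singleton_le_iff_mem _ |>.2 (Ideal.mem_span_singleton'.2 ⟨y, hyd⟩)
  have hyz : y * z = y := by rw [← hyd, mul_assoc, hdz]
  obtain ⟨a, ha⟩ := Ideal.mem_span_singleton'.1 <|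
    (Ideal.span_singleton_le_iff_mem _).1 (hle.eq_of_not_lt (hmin y ⟨hy, hy0, hyz⟩)).ge
  rw [← hdy, ← ha, mul_assoc, hy.1.eq]

end CentralIdempotent

section Semisimple

variable {R : Type*} [Ring R]

def twoSidedCore (N : AddSubgroup R) : TwoSidedIdeal R :=
  .mk' {x | ∀ a b, a * x * b ∈ N} (by simp [N.zero_mem])
    (fun hx hy a b => by simpa [mul_add, add_mul] using N.add_mem (hx a b) (hy a b))
    (fun hx a b => by simpa using N.neg_mem (hx a b))
    (fun {x _} hy a b => by simpa [mul_assoc] using hy (a * x) b)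
    (fun {_ y} hx a b => by simpa [mul_assoc] using hx a (y * b))

theorem mem_twoSidedCore {N : AddSubgroup R} {x : R} :
    x ∈ twoSidedCore N ↔ ∀ a b, a * x * b ∈ N :=
  TwoSidedIdeal.mem_mk' ..

variable [IsSemisimpleRing R]

theorem eq_zero_of_forall_mul_mul_eq_zero {x : R} (h : ∀ t, x * t * x = 0) : x = 0 := by
  have hx : x ∈ Ring.jacobson R := by
    rw [← Ideal.jacobson_bot, Ideal.mem_jacobson_iff]
    refine fun y => ⟨1 - y * x, ?_⟩
    rw [Ideal.mem_bot]
    calc (1 - y * x) * y * x + (1 - y * x) - 1 = -(y * (x * y * x)) := by noncomm_ring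
      _ = 0 := by rw [h, mul_zero, neg_zero]
  rwa [IsSemisimpleRing.jacobson_eq_bot, Ideal.mem_bot] at hx

theorem exists_isCentralIdempotent_generator (I : TwoSidedIdeal R) :
    ∃ z, IsCentralIdempotent z ∧ z ∈ I ∧ ∀ x ∈ I, x * z = x := by
  obtain ⟨e, he, hI⟩ := IsSemisimpleRing.ideal_eq_span_idempotent I.asIdeal
  have hmem : ∀ x, x ∈ I ↔ ∃ a, a * e = x := fun x => by
    rw [← TwoSidedIdeal.mem_asIdeal, hI, Ideal.mem_span_singleton']
  have hmul : ∀ x ∈ I, x * e = x := fun x hx => by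
    obtain ⟨a, rfl⟩ := (hmem x).1 hx
    rw [mul_assoc, he.eq]
  have heI : e ∈ I := (hmem e).2 ⟨1, one_mul e⟩
  refine ⟨e, ⟨he, fun s => ?_⟩, heI, hmul⟩
  -- `x t ∈ I = R e` and `e x = 0`, so `x R x = 0`.
  set x := s * e - e * s * e
  have hx : x ∈ I := sub_mem (I.mul_mem_left s e heI) (I.mul_mem_left _ e heI)
  have hex : e * x = 0 := by
    simp only [x, mul_sub, ← mul_assoc, he.eq, sub_self]
  have hx0 : x = 0 := eq_zero_of_forall_mul_mul_eq_zero fun t => by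
    rw [← hmul (x * t) (I.mul_mem_right x t hx), mul_assoc, hex, mul_zero]
  rw [← hmul (e * s) (I.mul_mem_right e s heI)]
  exact (sub_eq_zero.1 hx0).symm

theorem IsPrimitiveCentralIdempotent.mul_eq_zero_of_notMem {c w : R}
    (hc : IsPrimitiveCentralIdempotent c) {I : TwoSidedIdeal R} (hcI : c ∉ I) (hw : w ∈ I) :
    c * w = 0 := by
  obtain ⟨z, hz, hzI, hmul⟩ := exists_isCentralIdempotent_generator I
  rcases hc.2.2 (c * z) (hc.1.mul hz) (by rw [← mul_assoc, hc.1.1.eq]) with h | h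
  · rw [← hmul w hw, ← hz.2, ← mul_assoc, h, zero_mul]
  · exact absurd (h ▸ I.mul_mem_left c z hzI) hcI

theorem eq_zero_of_forall_isPrimitiveCentralIdempotent_mul_eq_zero {x : R}
    (h : ∀ c, IsPrimitiveCentralIdempotent c → c * x = 0) : x = 0 := by
  -- `I = {y | R y R x = 0}` is generated by `z`, and a primitive piece of `1 - z` would lie in `I`.
  obtain ⟨z, hz, hzI, hmul⟩ :=
    exists_isCentralIdempotent_generator (twoSidedCore (AddMonoidHom.mulRight x).ker)
  by_cases hz1 : 1 - z = 0
  · simpa [← sub_eq_zero.1 hz1] using mem_twoSidedCore.1 hzI 1 1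
  obtain ⟨c, hc, hcz⟩ := hz.one_sub.exists_isPrimitiveCentralIdempotent_mul_eq hz1
  have hcI : c ∈ twoSidedCore (AddMonoidHom.mulRight x).ker := mem_twoSidedCore.2 fun a b => by
    show a * c * b * x = 0
    rw [mul_assoc a, hc.1.2 b, ← mul_assoc, mul_assoc, h c hc, mul_zero]
  refine absurd ?_ hc.2.1
  rw [← hcz, mul_sub, mul_one, hmul c hcI, sub_self]

end Semisimple

section Strict

variable {R : Type*} [Ring R]

def IsStrict (e f : R) : Prop :=
  ∀ c, IsPrimitiveCentralIdempotent c → (c * e = 0 ↔ c * f = 0)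

theorem IsStrict.mul_mul {e f e' f' : R} (h : IsStrict e f) (he : e * e' * e = e)
    (hf : f * f' * f = f) : IsStrict (e * e') (f' * f) := by
  intro c hc
  have hce : c * (e * e') = 0 ↔ c * e = 0 :=
    ⟨fun h0 => by rw [← he, ← mul_assoc, ← mul_assoc, mul_assoc c e, h0, zero_mul],
      fun h0 => by rw [← mul_assoc, h0, zero_mul]⟩
  have hcf : c * (f' * f) = 0 ↔ c * f = 0 :=
    ⟨fun h0 => by rw [← hf, ← mul_assoc, ← mul_assoc, hc.1.2, mul_assoc, mul_assoc, h0, mul_zero],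
      fun h0 => by rw [← mul_assoc, hc.1.2, mul_assoc, h0, mul_zero]⟩
  rw [hce, hcf, h c hc]

variable [IsSemisimpleRing R]

theorem IsStrict.mul_eq_right_of_forall {e f e' : R} (h : IsStrict e f)
    (hcorner : ∀ x, e' * (e * x * f) = e * x * f) : e' * e = e := by
  have hw : ∀ x, (e - e' * e) * x * f = 0 := fun x => by
    rw [sub_mul, sub_mul, mul_assoc e' e x, mul_assoc e', hcorner, sub_self]
  refine (sub_eq_zero.1 <| eq_zero_of_forall_isPrimitiveCentralIdempotent_mul_eq_zero
    fun c hc => ?_).symm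
  by_cases hcI : c ∈ twoSidedCore (AddMonoidHom.mulRight f).ker
  · have hce : c * e = 0 := (h c hc).2 (by simpa using mem_twoSidedCore.1 hcI 1 1)
    rw [mul_sub, hce, ← mul_assoc, hc.1.2, mul_assoc, hce, mul_zero, sub_zero]
  · refine hc.mul_eq_zero_of_notMem hcI (mem_twoSidedCore.2 fun a b => ?_)
    show a * (e - e' * e) * b * f = 0
    rw [mul_assoc a _ b, mul_assoc a, hw, mul_zero]

theorem IsStrict.mul_eq_left_of_forall {e f f' : R} (h : IsStrict e f)
    (hcorner : ∀ x, e * x * f * f' = e * x * f) : f * f' = f := by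
  have hw : ∀ x, e * x * (f * f' - f) = 0 := fun x => by
    rw [mul_sub, ← mul_assoc, hcorner, sub_self]
  refine sub_eq_zero.1 <| eq_zero_of_forall_isPrimitiveCentralIdempotent_mul_eq_zero
    fun c hc => ?_
  by_cases hcI : c ∈ twoSidedCore (AddMonoidHom.mulLeft e).ker
  · have hcf : c * f = 0 := (h c hc).1 (by simpa [hc.1.2] using mem_twoSidedCore.1 hcI 1 1)
    rw [mul_sub, ← mul_assoc, hcf, zero_mul, sub_zero]
  · refine hc.mul_eq_zero_of_notMem hcI (mem_twoSidedCore.2 fun a b => ?_)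
    show e * (a * (f * f' - f) * b) = 0
    rw [← mul_assoc, ← mul_assoc, hw, zero_mul]

end Strict

section Quotient

variable {R : Type*} [Ring R] (I : Ideal R) [I.IsTwoSided]

theorem isCentralIdempotentMod_univ_iff {c : R} :
    IsCentralIdempotentMod Set.univ (I : Set R) c ↔
      IsCentralIdempotent (Ideal.Quotient.mk I c) := by
  simp only [IsCentralIdempotentMod, IsCentralIdempotent, IsIdempotentElem, Set.mem_univ,
    true_and, forall_const, SetLike.mem_coe, ← Ideal.Quotient.eq, map_mul,
    Ideal.Quotient.mk_surjective.forall]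
  exact and_comm

theorem isPrimitiveCentralIdempotentMod_univ_iff {c : R} :
    IsPrimitiveCentralIdempotentMod Set.univ (I : Set R) c ↔
      IsPrimitiveCentralIdempotent (Ideal.Quotient.mk I c) := by
  simp only [IsPrimitiveCentralIdempotentMod, IsPrimitiveCentralIdempotent,
    isCentralIdempotentMod_univ_iff, SetLike.mem_coe, ← Ideal.Quotient.eq_zero_iff_mem,
    map_mul, map_add, map_sub, sub_eq_zero]
  refine and_congr_right fun hc => and_congr_right fun hc0 => ⟨fun hno z hz hcz => ?_, ?_⟩
  · obtain ⟨z, rfl⟩ := Ideal.Quotient.mk_surjective z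
    by_contra! hne
    have hzc : Ideal.Quotient.mk I z * Ideal.Quotient.mk I c = Ideal.Quotient.mk I z := by
      rw [hz.2, hcz]
    refine hno ⟨z, c - z, hz, ?_, hne.1, ?_, ?_, ?_, ?_⟩
    · simpa only [map_sub, mul_sub, mul_one, hcz] using hc.mul hz.one_sub
    · rw [map_sub, sub_eq_zero]
      exact hne.2.symm
    · rw [map_sub, mul_sub, hzc, hz.1.eq, sub_self]
    · rw [map_sub, sub_mul, hcz, hz.1.eq, sub_self]
    · rw [map_sub, add_sub_cancel]
  · rintro h ⟨c₁, c₂, h₁, h₂, h₁0, h₂0, h₁₂, h₂₁, hsum⟩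
    rcases h _ h₁ (by rw [hsum, add_mul, h₁.1.eq, h₂₁, add_zero]) with h' | h'
    · exact h₁0 h'
    · rw [← h', left_eq_add] at hsum
      exact h₂0 hsum

theorem isStrictPairMod_univ_iff {e f : R} :
    IsStrictPairMod Set.univ (I : Set R) e f ↔
      IsStrict (Ideal.Quotient.mk I e) (Ideal.Quotient.mk I f) := by
  simp only [IsStrictPairMod, IsStrict, isPrimitiveCentralIdempotentMod_univ_iff,
    Ideal.Quotient.mk_surjective.forall, SetLike.mem_coe, ← Ideal.Quotient.eq_zero_iff_mem,
    map_mul]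

theorem isStrictPair_iff {e f : R} :
    IsStrictPair e f ↔ IsIdempotentElem e ∧ IsIdempotentElem f ∧
      IsStrict (Ideal.Quotient.mk (Ring.jacobson R) e) (Ideal.Quotient.mk (Ring.jacobson R) f) := by
  rw [IsStrictPair, Ideal.jacobson_bot, isStrictPairMod_univ_iff]
  rfl

end Quotient

section IdempotentLift

variable {R : Type*} [Ring R]

/-- Idempotent as soon as `(u - u ^ 2) ^ n = 0`, by `isIdempotentElem_one_sub_one_sub_pow_pow`. -/
def idempotentLift (u : R) (n : ℕ) : R := 1 - (1 - u ^ n) ^ n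

theorem map_idempotentLift {S : Type*} [Ring S] (f : R →+* S) (u : R) (n : ℕ) :
    f (idempotentLift u n) = idempotentLift (f u) n := by
  simp only [idempotentLift, map_sub, map_one, map_pow]

theorem idempotentLift_of_isIdempotentElem {u : R} (hu : IsIdempotentElem u) (n : ℕ) :
    idempotentLift u (n + 1) = u := by
  rw [idempotentLift, hu.pow_succ_eq, hu.one_sub.pow_succ_eq, sub_sub_cancel]

theorem exists_commute_idempotentLift_eq_mul (u : R) (n : ℕ) :
    ∃ r, Commute u r ∧ idempotentLift u (n + 1) = u * r := by
  refine ⟨u ^ n * ∑ i ∈ Finset.range (n + 1), (1 - u ^ (n + 1)) ^ i,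
    (Commute.self_pow u n).mul_right (Commute.sum_right _ _ _ fun i _ =>
      ((Commute.one_right u).sub_right (Commute.self_pow u _)).pow_right i), ?_⟩
  have h := mul_geom_sum (1 - u ^ (n + 1)) (n + 1)
  rw [sub_sub_cancel_left, neg_mul] at h
  rw [idempotentLift, ← mul_assoc, ← pow_succ', ← neg_sub, ← h, neg_neg]

theorem idempotentLift_mul_eq_self {u z : R} (h : u * z = z) (n : ℕ) :
    idempotentLift u (n + 1) * z = z := by
  have hpow : ∀ k, u ^ k * z = z := fun k => by
    induction k with
    | zero => rw [pow_zero, one_mul]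
    | succ k ih => rw [pow_succ, mul_assoc, h, ih]
  rw [idempotentLift, sub_mul, one_mul, pow_succ, mul_assoc, sub_mul, one_mul, hpow,
    sub_self, mul_zero, sub_zero]

theorem mul_idempotentLift_eq_self {u z : R} (h : z * u = z) (n : ℕ) :
    z * idempotentLift u (n + 1) = z := by
  have hpow : ∀ k, z * u ^ k = z := fun k => by
    induction k with
    | zero => rw [pow_zero, mul_one]
    | succ k ih => rw [pow_succ', ← mul_assoc, h, ih]
  rw [idempotentLift, mul_sub, mul_one, pow_succ', ← mul_assoc, mul_sub, mul_one, hpow,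
    sub_self, zero_mul, sub_zero]

theorem exists_isIdempotentElem_idempotentLift [IsArtinianRing R] {u : R}
    (hu : IsIdempotentElem (Ideal.Quotient.mk (Ring.jacobson R) u)) :
    ∃ n, IsIdempotentElem (idempotentLift u (n + 1)) ∧
      Ideal.Quotient.mk (Ring.jacobson R) (idempotentLift u (n + 1)) =
        Ideal.Quotient.mk (Ring.jacobson R) u := by
  have hmem : u - u ^ 2 ∈ Ring.jacobson R := Ideal.Quotient.eq_zero_iff_mem.1 <| by
    rw [map_sub, map_pow, sq, hu.eq, sub_self]
  obtain ⟨k, hk⟩ := IsSemiprimaryRing.isNilpotent (R := R)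
  have hnil : (u - u ^ 2) ^ k = 0 := by simpa [hk] using Ideal.pow_mem_pow hmem k
  refine ⟨k, isIdempotentElem_one_sub_one_sub_pow_pow u _ (by rw [pow_succ, hnil, zero_mul]), ?_⟩
  rw [map_idempotentLift, idempotentLift_of_isIdempotentElem hu]

end IdempotentLift

section CornerLift

variable {R : Type*} [Ring R] [IsArtinianRing R]

local notation "π" => Ideal.Quotient.mk (Ring.jacobson R)

theorem exists_idempotent_corner_lift_left {e e' : R} (he : IsIdempotentElem e)
    (he' : IsIdempotentElem e') (h : π e' * π e = π e) :
    ∃ p r, IsIdempotentElem p ∧ π p = π e * π e' ∧ e' * p = p ∧ p * e' = p ∧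
      p = e' * e * e' * r ∧ ∀ z, e' * z = z → e * z = z → p * z = z := by
  have hu : π (e' * e * e') = π e * π e' := by rw [map_mul, map_mul, h]
  obtain ⟨n, hp, hπp⟩ := exists_isIdempotentElem_idempotentLift (u := e' * e * e') <| by
    rw [hu, IsIdempotentElem, mul_assoc, ← mul_assoc (π e'), h, ← mul_assoc, (he.map _).eq]
  obtain ⟨r, hur, hpr⟩ := exists_commute_idempotentLift_eq_mul (e' * e * e') n
  refine ⟨_, r, hp, hπp.trans hu, ?_, ?_, hpr, fun z hz hez => idempotentLift_mul_eq_self ?_ n⟩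
  · rw [hpr, ← mul_assoc, ← mul_assoc, ← mul_assoc, he'.eq]
  · rw [hpr, hur.eq, mul_assoc, mul_assoc, he'.eq]
  · rw [mul_assoc, hz, mul_assoc, hez, hz]

theorem exists_idempotent_corner_lift_right {f f' : R} (hf : IsIdempotentElem f)
    (hf' : IsIdempotentElem f') (h : π f * π f' = π f) :
    ∃ q s, IsIdempotentElem q ∧ π q = π f' * π f ∧ f' * q = q ∧ q * f' = q ∧
      q = s * (f' * f * f') ∧ ∀ z, z * f' = z → z * f = z → z * q = z := by
  have hv : π (f' * f * f') = π f' * π f := by rw [map_mul, map_mul, mul_assoc, h]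
  obtain ⟨n, hq, hπq⟩ := exists_isIdempotentElem_idempotentLift (u := f' * f * f') <| by
    rw [hv, IsIdempotentElem, mul_assoc, ← mul_assoc (π f), h, (hf.map _).eq]
  obtain ⟨s, hvs, hqs⟩ := exists_commute_idempotentLift_eq_mul (f' * f * f') n
  refine ⟨_, s, hq, hπq.trans hv, ?_, ?_, hqs.trans hvs.eq,
    fun z hz hzf => mul_idempotentLift_eq_self ?_ n⟩
  · rw [hqs, ← mul_assoc, ← mul_assoc, ← mul_assoc, hf'.eq]
  · rw [hqs, hvs.eq, mul_assoc, mul_assoc (f' * f), hf'.eq]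
  · rw [← mul_assoc, ← mul_assoc, hz, hzf, hz]

end CornerLift

/-- **Theorem.** Let `A` be a finite-dimensional unital associative algebra over a
field, `(e,f)` a strict idempotent pair and `(e',f')` an idempotent pair with
`eAf ⊆ e'Af'`.  Then there is a strict idempotent pair `(e'',f'')` with
`e'e'' = e''e' = e''`, `f'f'' = f''f' = f''` and `e''Af'' = eAf`. -/
theorem strict_pair_inside (F A : Type*) [Field F] [Ring A] [Algebra F A]
    [FiniteDimensional F A] (e f e' f' : A)
    (hstrict : IsStrictPair e f)
    (he' : e' * e' = e') (hf' : f' * f' = f')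
    (hsub : ∀ x : A, ∃ y : A, e * x * f = e' * y * f') :
    ∃ e'' f'' : A, IsStrictPair e'' f'' ∧
      e' * e'' = e'' ∧ e'' * e' = e'' ∧ f' * f'' = f'' ∧ f'' * f' = f'' ∧
      (∀ x : A, ∃ y : A, e'' * x * f'' = e * y * f) ∧
      (∀ x : A, ∃ y : A, e * x * f = e'' * y * f'') := by
  have : IsArtinianRing A := IsArtinianRing.of_finite F A
  obtain ⟨he, hf, hef⟩ := isStrictPair_iff.1 hstrict
  have hcorner : ∀ x, e' * (e * x * f) = e * x * f ∧ e * x * f * f' = e * x * f := fun x => by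
    obtain ⟨y, hy⟩ := hsub x
    rw [hy]
    exact ⟨by rw [← mul_assoc, ← mul_assoc, he'], by rw [mul_assoc, hf']⟩
  have he'e := hef.mul_eq_right_of_forall (e' := Ideal.Quotient.mk _ e') <|
    Ideal.Quotient.mk_surjective.forall.2 fun x => by simp only [← map_mul, (hcorner x).1]
  have hff' := hef.mul_eq_left_of_forall (f' := Ideal.Quotient.mk _ f') <|
    Ideal.Quotient.mk_surjective.forall.2 fun x => by simp only [← map_mul, (hcorner x).2]
  obtain ⟨p, r, hp, hπp, he'p, hpe', hpr, hpz⟩ := exists_idempotent_corner_lift_left he he' he'e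
  obtain ⟨q, s, hq, hπq, hf'q, hqf', hqs, hzq⟩ :=
    exists_idempotent_corner_lift_right hf hf' hff'
  refine ⟨p, q, isStrictPair_iff.2 ⟨hp, hq, ?_⟩, he'p, hpe', hf'q, hqf',
    fun x => ⟨e' * (r * x * s) * f', ?_⟩, fun x => ⟨e * x * f, ?_⟩⟩
  · rw [hπp, hπq]
    exact hef.mul_mul (by rw [mul_assoc, he'e, (he.map _).eq]) (by rw [hff', (hf.map _).eq])
  · calc p * x * q = e' * (e * (e' * (r * x * s) * f') * f) * f' := by
          rw [hpr, hqs]; simp only [mul_assoc]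
      _ = e * (e' * (r * x * s) * f') * f := by rw [(hcorner _).1, (hcorner _).2]
  · rw [hpz _ (hcorner x).1 (by simp only [← mul_assoc, he.eq]),
      hzq _ (hcorner x).2 (by simp only [mul_assoc, hf.eq])]

end Paper
end

section
/- Let A be a finite-dimensional unital associative algebra over a field with Jacobson radical R, and let I be a left ideal of A that is bar-minimal, i.e. every left ideal J of A with J ⊆ I and J̄ = Ī (images in A/R) satisfies J = I. Then there exists an idempotent e ∈ I such that I = Ae. -/
namespace Paper

variable (F A : Type*) [Field F] [Ring A] [Algebra F A]

variable {F A}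

section AuxBarMinimal

variable {A : Type*} [Ring A]

/-- Every element of the Jacobson radical of a left-Artinian ring is nilpotent. -/
lemma aux_isNilpotent_of_mem_jacobson [IsArtinianRing A] {x : A}
    (hx : x ∈ Ideal.jacobson (⊥ : Ideal A)) : IsNilpotent x := by
  have hmono : ∀ k : ℕ, (Ideal.span {x ^ (k+1)} : Ideal A) ≤ Ideal.span {x ^ k} := by
    intro k
    rw [Ideal.span_le, Set.singleton_subset_iff]
    have : x ^ (k+1) = x • x ^ k := by rw [smul_eq_mul, ← pow_succ']
    rw [this]
    exact Submodule.smul_mem _ _ (Ideal.subset_span rfl)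
  obtain ⟨n, hn⟩ := IsArtinian.monotone_stabilizes (R := A) (M := A)
    ⟨fun k => OrderDual.toDual (Ideal.span {x ^ k} : Ideal A),
      monotone_nat_of_le_succ fun k => hmono k⟩
  have hmem : x ^ n ∈ (Ideal.span {x ^ (n+1)} : Ideal A) := by
    have h := hn (n+1) (Nat.le_succ n)
    have : (Ideal.span {x ^ n} : Ideal A) = Ideal.span {x ^ (n+1)} :=
      congrArg OrderDual.ofDual h
    rw [← this]
    exact Ideal.subset_span rfl
  obtain ⟨c, hc⟩ := Submodule.mem_span_singleton.mp hmem
  have hc' : c * x ^ (n+1) = x ^ n := by rw [← hc]; rfl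
  have hcx : (1 - c * x) * x ^ n = 0 := by
    have h1 : c * x ^ (n+1) = (c * x) * x ^ n := by rw [pow_succ', ← mul_assoc]
    have h2 : (c * x) * x ^ n = x ^ n := by rw [← h1, hc']
    rw [sub_mul, one_mul, h2, sub_self]
  have hmemr : -(c * x) ∈ Ideal.jacobson (⊥ : Ideal A) := by
    have : (c * x) ∈ Ideal.jacobson (⊥ : Ideal A) := by
      have := Submodule.smul_mem (Ideal.jacobson (⊥ : Ideal A)) c hx
      simpa using this
    exact Submodule.neg_mem _ this
  obtain ⟨s, hs⟩ := Ideal.exists_mul_add_sub_mem_of_mem_jacobson _ hmemr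
  rw [Ideal.mem_bot, sub_eq_zero] at hs
  have hs' : s * (1 - c * x) = 1 := by
    have h : -(c * x) + 1 = 1 - c * x := by noncomm_ring
    rwa [h] at hs
  refine ⟨n, ?_⟩
  calc x ^ n = (s * (1 - c * x)) * x ^ n := by rw [hs', one_mul]
  _ = s * ((1 - c * x) * x ^ n) := by rw [mul_assoc]
  _ = 0 := by rw [hcx, mul_zero]

/-- In a left-Artinian ring, every left ideal has an element `x` generating it
modulo the Jacobson radical. -/
lemma aux_exists_gen_mod [IsArtinianRing A] (I : Ideal A) :
    ∃ x ∈ I, ∀ a ∈ I, a - a * x ∈ Ideal.jacobson (⊥ : Ideal A) := by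
  set R' : Ideal A := Ideal.jacobson (⊥ : Ideal A) with hR'
  set π := (R' : Submodule A A).mkQ with hπ
  have hsurj : Function.Surjective π := Submodule.mkQ_surjective _
  set N := Submodule.map π (I : Submodule A A) with hN
  obtain ⟨K, hK, hKmin⟩ := IsArtinian.set_has_minimal (R := A)
    {K : Submodule A (A ⧸ (R' : Submodule A A)) | N ⊔ K = ⊤} ⟨⊤, by simp⟩
  have hdisj : N ⊓ K = ⊥ := by
    by_contra hne
    set C := Submodule.comap π (N ⊓ K) with hC
    have hCmap : Submodule.map π C = N ⊓ K := Submodule.map_comap_eq_of_surjective hsurj _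
    have hCR : ¬ C ≤ R' := by
      intro h
      apply hne
      have h2 : Submodule.map π C ≤ Submodule.map π (R' : Submodule A A) :=
        Submodule.map_mono h
      rw [hCmap, Submodule.mkQ_map_self] at h2
      exact le_bot_iff.mp h2
    obtain ⟨m, hm, hCm⟩ : ∃ m : Ideal A, m.IsMaximal ∧ ¬ C ≤ m := by
      by_contra h
      push_neg at h
      exact hCR (le_sInf fun J hJ => h J hJ.2)
    have hR'm : R' ≤ m := sInf_le ⟨bot_le, hm⟩
    set W := Submodule.map π (m : Submodule A A) with hW
    have hNKW : ¬ N ⊓ K ≤ W := by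
      intro h
      apply hCm
      calc C ≤ Submodule.comap π W := Submodule.comap_mono h
      _ = (R' : Submodule A A) ⊔ m := Submodule.comap_map_mkQ _ _
      _ = m := sup_eq_right.mpr hR'm
    have hmC : m ⊔ C = ⊤ := by
      rcases Ideal.isMaximal_def.mp hm with ⟨-, hmax⟩
      refine hmax _ (lt_of_le_of_ne le_sup_left fun h => hCm ?_)
      rw [h]
      exact le_sup_right
    have hWtop : W ⊔ (N ⊓ K) = ⊤ := by
      calc W ⊔ (N ⊓ K) = Submodule.map π ((m : Submodule A A) ⊔ C) := by
            rw [Submodule.map_sup, hCmap]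
      _ = ⊤ := by rw [hmC, Submodule.map_top, Submodule.range_mkQ]
    have hKmod : (N ⊓ K) ⊔ (W ⊓ K) = K := by
      have h := sup_inf_assoc_of_le (x := N ⊓ K) W (inf_le_right : N ⊓ K ≤ K)
      rw [sup_comm (N ⊓ K) W, hWtop, top_inf_eq] at h
      exact h.symm
    have hK' : N ⊔ (W ⊓ K) = ⊤ := by
      have : N ⊔ K = N ⊔ (W ⊓ K) := by
        conv_lhs => rw [← hKmod]
        rw [← sup_assoc, sup_eq_left.mpr (inf_le_left : N ⊓ K ≤ N)]
      rw [← this, hK]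
    have hlt : W ⊓ K < K := by
      refine lt_of_le_of_ne inf_le_right fun h => hNKW ?_
      calc N ⊓ K ≤ K := inf_le_right
      _ = W ⊓ K := h.symm
      _ ≤ W := inf_le_left
    exact hKmin _ hK' hlt
  set KA := Submodule.comap π K with hKA
  have hIKA : (I : Submodule A A) ⊓ KA ≤ (R' : Submodule A A) := by
    intro z hz
    have hzm : π z ∈ N ⊓ K := ⟨Submodule.mem_map_of_mem hz.1, hz.2⟩
    rw [hdisj, Submodule.mem_bot] at hzm
    have : z ∈ LinearMap.ker π := hzm
    rwa [Submodule.ker_mkQ] at this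
  have htop : (I : Submodule A A) ⊔ KA = ⊤ := by
    have h1 : Submodule.map π ((I : Submodule A A) ⊔ KA) = ⊤ := by
      rw [Submodule.map_sup, Submodule.map_comap_eq_of_surjective hsurj, ← hN, hK]
    have h2 := congrArg (Submodule.comap π) h1
    rw [Submodule.comap_map_eq, Submodule.ker_mkQ, Submodule.comap_top] at h2
    have hRKA : (R' : Submodule A A) ≤ KA := Submodule.le_comap_mkQ _ _
    rw [← h2, sup_assoc, sup_eq_left.mpr hRKA]
  have h1mem : (1 : A) ∈ (I : Submodule A A) ⊔ KA := htop ▸ Submodule.mem_top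
  obtain ⟨x, hxI, k, hk, hxk⟩ := Submodule.mem_sup.mp h1mem
  refine ⟨x, hxI, fun a ha => ?_⟩
  have hak : a - a * x = a * k := by
    have h : a * x + a * k = a := by
      have h' : a * (x + k) = a * 1 := by rw [hxk]
      rwa [mul_add, mul_one] at h'
    calc a - a * x = (a * x + a * k) - a * x := by rw [h]
    _ = a * k := by abel
  have hmem : a - a * x ∈ (I : Submodule A A) ⊓ KA := by
    constructor
    · exact Submodule.sub_mem _ ha (I.mul_mem_left a hxI)
    · rw [hak]
      exact Submodule.smul_mem KA a hk
  exact hIKA hmem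

end AuxBarMinimal

/-- **Proposition.** Let `A` be a finite-dimensional unital associative algebra over a
field and let `I` be a bar-minimal left ideal of `A`.  Then `I = Ae` for some
idempotent `e ∈ I`. -/
theorem barMinimal_left_ideal (F A : Type*) [Field F] [Ring A] [Algebra F A]
    [FiniteDimensional F A] (I : Ideal A)
    (hmin : ∀ J : Ideal A, J ≤ I →
      (∀ x ∈ I, ∃ y ∈ J, x - y ∈ Ideal.jacobson (⊥ : Ideal A)) → J = I) :
    ∃ e ∈ I, e * e = e ∧ ∀ x : A, x ∈ I ↔ ∃ a : A, x = a * e := by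
  haveI hart : IsArtinian A A := isArtinian_of_tower F inferInstance
  set R' : Ideal A := Ideal.jacobson (⊥ : Ideal A) with hR'
  obtain ⟨x, hxI, hgen⟩ := aux_exists_gen_mod I
  -- `x` is idempotent mod the radical, and the radical is elementwise nilpotent.
  have hx2 : x * x - x ∈ R' := by
    have h := hgen x hxI
    have : x * x - x = -(x - x * x) := by noncomm_ring
    rw [this]
    exact Submodule.neg_mem _ h
  have hnil : IsNilpotent (x - x ^ 2) := by
    apply aux_isNilpotent_of_mem_jacobson
    have : x - x ^ 2 = -(x * x - x) := by noncomm_ring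
    rw [this]
    exact Submodule.neg_mem _ hx2
  obtain ⟨n, hn⟩ := hnil
  set N := n + 1 with hNdef
  have hn' : (x - x ^ 2) ^ N = 0 := by rw [pow_succ, hn, zero_mul]
  set e := 1 - (1 - x ^ N) ^ N with he_def
  have hidem : IsIdempotentElem e := isIdempotentElem_one_sub_one_sub_pow_pow x N hn'
  -- `e` lies in `I` since it is a left multiple of `x`.
  have he_eq : e = ((∑ i ∈ Finset.range N, (1 - x ^ N) ^ i) * x ^ n) * x := by
    have hg := geom_sum_mul (1 - x ^ N) N
    have h1 : ((1 - x ^ N) - 1) = -(x ^ N) := by noncomm_ring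
    rw [h1] at hg
    have h2 : (∑ i ∈ Finset.range N, (1 - x ^ N) ^ i) * x ^ N = e := by
      rw [he_def, ← neg_neg ((∑ i ∈ Finset.range N, (1 - x ^ N) ^ i) * x ^ N),
        ← mul_neg, hg, neg_sub]
    rw [← h2, mul_assoc, ← pow_succ, ← hNdef]
  have heI : e ∈ I := by
    rw [he_eq]
    exact I.mul_mem_left _ hxI
  -- powers congruent mod radical
  have hpow : ∀ y : A, y * y - y ∈ R' → ∀ k : ℕ, y ^ (k + 1) - y ∈ R' := by
    intro y hy k
    induction k with
    | zero => simp
    | succ k ih =>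
      have heq : y ^ (k + 2) - y = y * (y ^ (k + 1) - y) + (y * y - y) := by
        have : y ^ (k + 2) = y * y ^ (k + 1) := by rw [pow_succ']
        rw [this]
        noncomm_ring
      rw [heq]
      exact Submodule.add_mem _ (Ideal.mul_mem_left _ y ih) hy
  have hxN : x ^ N - x ∈ R' := hpow x hx2 n
  set b := 1 - x ^ N with hb_def
  have hb2 : b * b - b ∈ R' := by
    have h1 : b * b - b = (x ^ N * x ^ N - x) - (x ^ N - x) := by
      rw [hb_def]
      noncomm_ring
    rw [h1]
    have h2 : x ^ N * x ^ N - x ∈ R' := by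
      rw [← pow_add]
      have h3 : N + N = (n + N) + 1 := by omega
      rw [h3]
      exact hpow x hx2 (n + N)
    exact Submodule.sub_mem _ h2 hxN
  have hbN : b ^ N - b ∈ R' := hpow b hb2 n
  have hex : e - x ∈ R' := by
    have h1 : e - x = (b - b ^ N) + (x ^ N - x) := by
      rw [he_def, hb_def]
      noncomm_ring
    rw [h1]
    have h2 : b - b ^ N = -(b ^ N - b) := by noncomm_ring
    exact Submodule.add_mem _ (h2 ▸ Submodule.neg_mem _ hbN) hxN
  -- conclude via bar-minimality
  have hJI : Ideal.span {e} ≤ I := by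
    rw [Ideal.span_le, Set.singleton_subset_iff]
    exact heI
  have hspan : Ideal.span {e} = I := by
    refine hmin _ hJI fun z hz => ?_
    refine ⟨z * e, ?_, ?_⟩
    · have : z * e = z • e := rfl
      rw [this]
      exact Submodule.smul_mem _ z (Ideal.subset_span rfl)
    · have h1 : z - z * e = (z - z * x) - z • (e - x) := by
        rw [smul_eq_mul]
        noncomm_ring
      rw [h1]
      exact Submodule.sub_mem _ (hgen z hz) (Submodule.smul_mem _ z hex)
  refine ⟨e, heI, hidem, fun z => ?_⟩
  rw [← hspan]
  constructor
  · intro hz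
    obtain ⟨a, ha⟩ := Submodule.mem_span_singleton.mp hz
    exact ⟨a, by rw [← ha, smul_eq_mul]⟩
  · rintro ⟨a, rfl⟩
    exact Submodule.smul_mem _ a (Ideal.subset_span rfl)

end Paper
end

section
/- Let A be a finite-dimensional semisimple unital associative algebra over an algebraically closed field of characteristic p with p ≠ 2 and p ≠ 3, let k ≥ 0 and L = A^(k). Then every Jordan-Lie inner ideal B of L is L-perfect, i.e. B = [B,[B,L]]. -/
namespace Paper

variable (F A : Type*) [Field F] [Ring A] [Algebra F A]

variable {F A}

section Aux

variable {A' : Type*} [Ring A']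

/-- A left ideal on which multiplication vanishes is contained in the Jacobson radical. -/
lemma aux_sq_zero_le_jacobson (T : Ideal A') (hT : ∀ s ∈ T, ∀ t ∈ T, s * t = 0) :
    T ≤ Ideal.jacobson (⊥ : Ideal A') := by
  intro t ht
  rw [Ideal.jacobson, Submodule.mem_sInf]
  rintro J ⟨-, hJmax⟩
  by_contra htJ
  have hlt : J < J ⊔ Submodule.span A' {t} := by
    refine lt_of_le_of_ne le_sup_left (fun h => htJ ?_)
    exact h ▸ Submodule.mem_sup_right (Submodule.mem_span_singleton_self t)
  have hsup : J ⊔ Submodule.span A' {t} = ⊤ := hJmax.1.2 _ hlt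
  have h1 : (1 : A') ∈ J ⊔ Submodule.span A' {t} := hsup ▸ Submodule.mem_top
  obtain ⟨m, hm, y, hy, hmy⟩ := Submodule.mem_sup.mp h1
  obtain ⟨a, rfl⟩ := Submodule.mem_span_singleton.mp hy
  have hu : a • t ∈ T := T.smul_mem a ht
  have huu : (a • t) * (a • t) = 0 := hT _ hu _ hu
  have hm' : m = 1 - a • t := by linear_combination (norm := abel) hmy
  have hinv : ((1 : A') + a • t) * m = 1 := by
    have huu' : a * (t * (a * t)) = 0 := by
      rw [← mul_assoc]; rw [smul_eq_mul] at huu; exact huu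
    rw [hm', smul_eq_mul]
    noncomm_ring
    rw [huu']
    simp
  have : (1 : A') ∈ J := by
    have := J.smul_mem ((1 : A') + a • t) hm
    rwa [smul_eq_mul, hinv] at this
  exact hJmax.ne_top ((Ideal.eq_top_iff_one J).mpr this)

/-- In a semiprimitive Artinian ring, every nonzero left ideal contains a nonzero
idempotent. -/
lemma aux_exists_idempotent [IsArtinian A' A']
    (hss : Ideal.jacobson (⊥ : Ideal A') = ⊥) {I : Ideal A'} (hI : I ≠ ⊥) :
    ∃ e ∈ I, e * e = e ∧ e ≠ 0 := by
  have hwf : WellFounded ((· < ·) : Ideal A' → Ideal A' → Prop) :=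
    (isArtinian_iff A' A').mp inferInstance
  obtain ⟨I', ⟨hI'0, hI'le⟩, hmin⟩ :=
    hwf.has_min {J : Ideal A' | J ≠ ⊥ ∧ J ≤ I} ⟨I, hI, le_rfl⟩
  have hTT : ¬ ∀ s ∈ I', ∀ t ∈ I', s * t = 0 := by
    intro h
    exact hI'0 (le_bot_iff.mp (hss ▸ aux_sq_zero_le_jacobson I' h))
  push_neg at hTT
  obtain ⟨s, hs, a, ha, hsa⟩ := hTT
  have ha0 : a ≠ 0 := fun h => hsa (by rw [h, mul_zero])
  set φ : A' →ₗ[A'] A' := LinearMap.toSpanSingleton A' A' a with hφ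
  have hφ_apply : ∀ y : A', φ y = y * a := fun y => rfl
  -- The kernel piece is zero by minimality
  have hK : I' ⊓ LinearMap.ker φ = ⊥ := by
    by_contra hK0
    refine hmin _ ⟨hK0, le_trans inf_le_left hI'le⟩
      (lt_of_le_of_ne inf_le_left (fun h => hsa ?_))
    have hmem : s ∈ I' ⊓ LinearMap.ker φ := by rw [h]; exact hs
    simpa [hφ_apply] using hmem.2
  -- The image is all of `I'` by minimality
  have himle : Submodule.map φ I' ≤ I' := by
    rintro z ⟨y, hy, rfl⟩
    simpa [hφ_apply, smul_eq_mul] using I'.smul_mem y ha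
  have him0 : Submodule.map φ I' ≠ ⊥ := by
    intro h
    have : φ s = 0 := by
      have : φ s ∈ (⊥ : Ideal A') := h ▸ ⟨s, hs, rfl⟩
      simpa using this
    exact hsa (by simpa [hφ_apply] using this)
  have him : Submodule.map φ I' = I' := by
    by_contra h
    exact hmin _ ⟨him0, le_trans himle hI'le⟩ (lt_of_le_of_ne himle h)
  obtain ⟨e, he, hea⟩ : ∃ e ∈ I', e * a = a := by
    have : a ∈ Submodule.map φ I' := him.symm ▸ ha
    obtain ⟨e, he, heq⟩ := this
    exact ⟨e, he, by simpa [hφ_apply] using heq⟩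
  have hee : e * e - e ∈ I' ⊓ LinearMap.ker φ := by
    rw [Submodule.mem_inf]
    refine ⟨sub_mem (by simpa [smul_eq_mul] using I'.smul_mem e he) he, ?_⟩
    rw [LinearMap.mem_ker, hφ_apply, sub_mul, mul_assoc, hea, hea, sub_self]
  rw [hK, Submodule.mem_bot, sub_eq_zero] at hee
  have he0 : e ≠ 0 := by
    intro h
    rw [h, zero_mul] at hea
    exact ha0 hea.symm
  exact ⟨e, hI'le he, hee, he0⟩

/-- Every element of a finite-dimensional semiprimitive algebra is von Neumann regular. -/
lemma aux_vnr {F : Type*} [Field F] [Algebra F A'] [FiniteDimensional F A']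
    (hss : Ideal.jacobson (⊥ : Ideal A') = ⊥) (b : A') :
    ∃ x : A', b * x * b = b := by
  have : IsArtinian A' A' := isArtinian_of_tower F inferInstance
  have hwf : WellFounded ((· < ·) : Ideal A' → Ideal A' → Prop) :=
    (isArtinian_iff A' A').mp inferInstance
  set I : Ideal A' := Submodule.span A' {b} with hI
  set K : A' → Ideal A' := fun e => I ⊓ LinearMap.ker (LinearMap.toSpanSingleton A' A' e)
    with hKdef
  have hKmem : ∀ e y, y ∈ K e ↔ y ∈ I ∧ y * e = 0 := by
    intro e y; rw [hKdef]; simp [LinearMap.mem_ker, LinearMap.toSpanSingleton_apply,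
      smul_eq_mul, Submodule.mem_inf]
  obtain ⟨J₀, ⟨e₀, he₀I, he₀idem, hJ₀⟩, hmin⟩ :=
    hwf.has_min {J : Ideal A' | ∃ e ∈ I, e * e = e ∧ J = K e}
      ⟨K 0, 0, I.zero_mem, by rw [mul_zero], rfl⟩
  -- `J₀ = K e₀` is zero: otherwise we could enlarge the idempotent.
  have hJ₀bot : J₀ = ⊥ := by
    by_contra hJ₀0
    obtain ⟨f, hf, hff, hf0⟩ := aux_exists_idempotent hss hJ₀0
    rw [hJ₀, hKmem] at hf
    obtain ⟨hfI, hfe₀⟩ := hf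
    set e' : A' := e₀ + f - e₀ * f with he'
    have he'I : e' ∈ I := by
      refine sub_mem (add_mem he₀I hfI) ?_
      simpa [smul_eq_mul] using I.smul_mem e₀ hfI
    have he'idem : e' * e' = e' := by
      have expand : e' * e' = e₀ * e₀ + e₀ * f - e₀ * e₀ * f + f * e₀ + f * f
          - f * e₀ * f - e₀ * (f * e₀) - e₀ * (f * f) + e₀ * (f * e₀) * f := by
        rw [he']; noncomm_ring
      rw [expand, he₀idem, hff, hfe₀, he']
      simp only [zero_mul, mul_zero]
      abel
    have he'e₀ : e' * e₀ = e₀ := by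
      have expand : e' * e₀ = e₀ * e₀ + f * e₀ - e₀ * (f * e₀) := by
        rw [he']; noncomm_ring
      rw [expand, he₀idem, hfe₀, mul_zero]; abel
    have hfe' : f * e' = f := by
      have expand : f * e' = f * e₀ + f * f - f * e₀ * f := by
        rw [he']; noncomm_ring
      rw [expand, hff, hfe₀, zero_mul]; abel
    have hle : K e' ≤ J₀ := by
      intro y hy
      rw [hKmem] at hy
      rw [hJ₀, hKmem]
      refine ⟨hy.1, ?_⟩
      calc y * e₀ = y * (e' * e₀) := by rw [he'e₀]
        _ = y * e' * e₀ := by rw [mul_assoc]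
        _ = 0 := by rw [hy.2, zero_mul]
    have hne : K e' ≠ J₀ := by
      intro h
      have hfK : f ∈ K e' := by rw [h, hJ₀, hKmem]; exact ⟨hfI, hfe₀⟩
      rw [hKmem] at hfK
      exact hf0 (by rw [← hfe', hfK.2])
    exact hmin _ ⟨e', he'I, he'idem, rfl⟩ (lt_of_le_of_ne hle hne)
  have hb : b - b * e₀ ∈ J₀ := by
    rw [hJ₀, hKmem]
    constructor
    · exact sub_mem (Submodule.mem_span_singleton_self b)
        (by simpa [smul_eq_mul] using I.smul_mem b he₀I)
    · rw [sub_mul, mul_assoc, he₀idem, sub_self]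
  rw [hJ₀bot, Submodule.mem_bot, sub_eq_zero] at hb
  obtain ⟨x, hx⟩ := Submodule.mem_span_singleton.mp he₀I
  refine ⟨x, ?_⟩
  have hxb : x * b = e₀ := by rw [← smul_eq_mul]; exact hx
  rw [mul_assoc, hxb, ← hb]

end Aux

/-- The derived series is decreasing. -/
lemma derivedSeries_succ_le (F A : Type*) [Field F] [Ring A] [Algebra F A] :
    ∀ k, derivedSeries F A (k + 1) ≤ derivedSeries F A k := by
  intro k
  induction k with
  | zero => exact le_top
  | succ k ih =>
    apply Submodule.span_le.mpr
    rintro z ⟨x, hx, y, hy, rfl⟩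
    exact Submodule.subset_span ⟨x, ih hx, y, ih hy, rfl⟩

lemma derivedSeries_le_of_le (F A : Type*) [Field F] [Ring A] [Algebra F A]
    {j k : ℕ} (h : j ≤ k) : derivedSeries F A k ≤ derivedSeries F A j := by
  induction k with
  | zero => rw [Nat.le_zero.mp h]
  | succ k ih =>
    rcases Nat.lt_or_ge j (k + 1) with h' | h'
    · exact le_trans (derivedSeries_succ_le F A k) (ih (Nat.lt_succ_iff.mp h'))
    · rw [le_antisymm h h']

lemma lie_mem_derivedSeries_succ (F A : Type*) [Field F] [Ring A] [Algebra F A]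
    {k : ℕ} {x y : A} (hx : x ∈ derivedSeries F A k) (hy : y ∈ derivedSeries F A k) :
    ⁅x, y⁆ ∈ derivedSeries F A (k + 1) :=
  Submodule.subset_span ⟨x, hx, y, hy, rfl⟩

/-- **Lemma.** Suppose `A` is finite-dimensional semisimple over an algebraically
closed field of characteristic `p ≠ 2,3` and `k ≥ 0`.  Then every Jordan-Lie inner
ideal `B` of `L = A⁽ᵏ⁾` is `L`-perfect, i.e. `B = [B,[B,L]]`. -/
theorem jordanLie_is_L_perfect (F A : Type*) [Field F] [IsAlgClosed F] (p : ℕ)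
    [CharP F p] (hp2 : p ≠ 2) (hp3 : p ≠ 3) [Ring A] [Algebra F A]
    [FiniteDimensional F A]
    (hss : Ideal.jacobson (⊥ : Ideal A) = ⊥) (k : ℕ) (B : Submodule F A)
    (hJLie : IsJordanLie (derivedSeries F A k) B) :
    Submodule.span F {z : A | ∃ b ∈ B, ∃ b' ∈ B, ∃ x ∈ derivedSeries F A k,
      z = ⁅b, ⁅b', x⁆⁆} = B := by
  have h2 : (2 : F) ≠ 0 := by
    intro h
    have hdvd : p ∣ 2 := (CharP.cast_eq_zero_iff F p 2).mp (by exact_mod_cast h)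
    rcases (Nat.dvd_prime Nat.prime_two).mp hdvd with h1 | h1
    · exact CharP.char_ne_one F p h1
    · exact hp2 h1
  apply le_antisymm
  · apply Submodule.span_le.mpr
    rintro z ⟨b, hb, b', hb', x, hx, rfl⟩
    exact hJLie.1.2 b hb b' hb' x hx
  · intro b hb
    have hbb : b * b = 0 := hJLie.2 b hb b hb
    have hbL : b ∈ derivedSeries F A k := hJLie.1.1 hb
    -- Find `x ∈ A⁽ᵏ⁾` with `b * x * b = b`, by descending the derived series.
    have key : ∀ j, j ≤ k → ∃ x ∈ derivedSeries F A j, b * x * b = b := by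
      intro j
      induction j with
      | zero =>
        intro _
        obtain ⟨x, hx⟩ := aux_vnr (F := F) hss b
        exact ⟨x, by rw [show derivedSeries F A 0 = ⊤ from rfl]; exact Submodule.mem_top, hx⟩
      | succ j ih =>
        intro hjk
        obtain ⟨x, hxj, hbxb⟩ := ih (Nat.le_of_succ_le hjk)
        have hbj : b ∈ derivedSeries F A j :=
          derivedSeries_le_of_le F A (Nat.le_of_succ_le hjk) hbL
        set c : A := ⁅⁅b, x⁆, x⁆ with hc
        have hcmem : c ∈ derivedSeries F A (j + 1) :=
          lie_mem_derivedSeries_succ F A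
            (derivedSeries_succ_le F A j (lie_mem_derivedSeries_succ F A hbj hxj)) hxj
        have hbcb : b * c * b = -(b + b) := by
          have expand : b * c * b = b * b * (x * (x * b)) - b * x * b * x * b
              - b * x * b * x * b + b * x * x * (b * b) := by
            rw [hc, Ring.lie_def, Ring.lie_def]; noncomm_ring
          rw [hbb, hbxb, hbxb] at expand
          rw [expand]; noncomm_ring
        refine ⟨(-(2 : F)⁻¹) • c, Submodule.smul_mem _ _ hcmem, ?_⟩
        rw [mul_smul_comm, smul_mul_assoc, hbcb, smul_neg, neg_smul, neg_neg,
          ← two_smul F b, smul_smul, inv_mul_cancel₀ h2, one_smul]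
    obtain ⟨x, hxL, hbxb⟩ := key k le_rfl
    have hlie : ⁅b, ⁅b, x⁆⁆ = -(b + b) := by
      have expand : ⁅b, ⁅b, x⁆⁆ = b * b * x - b * x * b - b * x * b + x * (b * b) := by
        rw [Ring.lie_def, Ring.lie_def]; noncomm_ring
      rw [expand, hbb, hbxb]; noncomm_ring
    have hgen : ⁅b, ⁅b, x⁆⁆ ∈ Submodule.span F {z : A | ∃ b ∈ B, ∃ b' ∈ B,
        ∃ x ∈ derivedSeries F A k, z = ⁅b, ⁅b', x⁆⁆} :=
      Submodule.subset_span ⟨b, hb, b, hb, x, hxL, rfl⟩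
    have hbeq : b = (-(2 : F)⁻¹) • ⁅b, ⁅b, x⁆⁆ := by
      rw [hlie, smul_neg, neg_smul, neg_neg, ← two_smul F b, smul_smul,
        inv_mul_cancel₀ h2, one_smul]
    rw [hbeq]
    exact Submodule.smul_mem _ _ hgen

end Paper
end

section
/- Let A be a finite-dimensional unital associative algebra over a field, let L = A^(k) for some k ≥ 0, and let B be a subspace of L. Then B is a regular inner ideal of L if and only if there exist a left ideal 𝓛 and a right ideal 𝓡 of A such that 𝓛𝓡 = 0 and 𝓡𝓛 ⊆ B ⊆ 𝓡 ∩ 𝓛. -/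
namespace Paper

variable (F A : Type*) [Field F] [Ring A] [Algebra F A]

variable {F A}

/-- **Proposition.** Let `L = A⁽ᵏ⁾` and let `B` be a subspace of `L`.  Then `B` is a
regular inner ideal of `L` iff there are a left ideal `𝓛` and a right ideal `𝓡` of
`A` with `𝓛𝓡 = 0` and `𝓡𝓛 ⊆ B ⊆ 𝓡 ∩ 𝓛`. -/
theorem regular_iff_ideals (F A : Type*) [Field F] [Ring A] [Algebra F A]
    [FiniteDimensional F A] (k : ℕ) (B : Submodule F A)
    (hBL : B ≤ derivedSeries F A k) :
    (IsInnerIdeal (derivedSeries F A k) B ∧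
        (∀ b ∈ B, ∀ b' ∈ B, b * b' = 0) ∧
        (∀ b ∈ B, ∀ x : A, ∀ b' ∈ B, b * x * b' ∈ B)) ↔
      ∃ 𝓛 𝓡 : Submodule F A,
        (∀ a : A, ∀ x ∈ 𝓛, a * x ∈ 𝓛) ∧
        (∀ a : A, ∀ x ∈ 𝓡, x * a ∈ 𝓡) ∧
        (∀ x ∈ 𝓛, ∀ y ∈ 𝓡, x * y = 0) ∧
        (∀ x ∈ 𝓡, ∀ y ∈ 𝓛, x * y ∈ B) ∧
        B ≤ 𝓡 ⊓ 𝓛 := by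
  constructor
  · rintro ⟨-, hsq, hmid⟩
    set 𝓛 : Submodule F A := Submodule.span F {z : A | ∃ a : A, ∃ b ∈ B, z = a * b} with h𝓛
    set 𝓡 : Submodule F A := Submodule.span F {z : A | ∃ b ∈ B, ∃ a : A, z = b * a} with h𝓡
    have hgenL : ∀ a : A, ∀ b ∈ B, a * b ∈ 𝓛 := fun a b hb =>
      Submodule.subset_span ⟨a, b, hb, rfl⟩
    have hgenR : ∀ b ∈ B, ∀ a : A, b * a ∈ 𝓡 := fun b hb a =>
      Submodule.subset_span ⟨b, hb, a, rfl⟩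
    refine ⟨𝓛, 𝓡, ?_, ?_, ?_, ?_, ?_⟩
    · -- left ideal
      intro a x hx
      induction hx using Submodule.span_induction with
      | mem z hz =>
        obtain ⟨a', b, hb, rfl⟩ := hz
        rw [← mul_assoc]; exact hgenL _ b hb
      | zero => simpa using (𝓛.zero_mem)
      | add y z _ _ hy hz => rw [mul_add]; exact 𝓛.add_mem hy hz
      | smul c y _ hy => rw [mul_smul_comm]; exact 𝓛.smul_mem c hy
    · -- right ideal
      intro a x hx
      induction hx using Submodule.span_induction with
      | mem z hz =>
        obtain ⟨b, hb, a', rfl⟩ := hz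
        rw [mul_assoc]; exact hgenR b hb _
      | zero => simpa using (𝓡.zero_mem)
      | add y z _ _ hy hz => rw [add_mul]; exact 𝓡.add_mem hy hz
      | smul c y _ hy => rw [smul_mul_assoc]; exact 𝓡.smul_mem c hy
    · -- 𝓛 * 𝓡 = 0
      intro x hx
      induction hx using Submodule.span_induction with
      | mem z hz =>
        obtain ⟨a, b, hb, rfl⟩ := hz
        intro y hy
        induction hy using Submodule.span_induction with
        | mem w hw =>
          obtain ⟨b', hb', a', rfl⟩ := hw
          rw [mul_assoc, ← mul_assoc b, hsq b hb b' hb', zero_mul, mul_zero]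
        | zero => rw [mul_zero]
        | add u v _ _ hu hv => rw [mul_add, hu, hv, add_zero]
        | smul c u _ hu => rw [mul_smul_comm, hu, smul_zero]
      | zero => intro y _; rw [zero_mul]
      | add u v _ _ hu hv => intro y hy; rw [add_mul, hu y hy, hv y hy, add_zero]
      | smul c u _ hu => intro y hy; rw [smul_mul_assoc, hu y hy, smul_zero]
    · -- 𝓡 * 𝓛 ⊆ B
      intro x hx
      induction hx using Submodule.span_induction with
      | mem z hz =>
        obtain ⟨b, hb, a, rfl⟩ := hz
        intro y hy
        induction hy using Submodule.span_induction with
        | mem w hw =>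
          obtain ⟨a', b', hb', rfl⟩ := hw
          have : b * a * (a' * b') = b * (a * a') * b' := by noncomm_ring
          rw [this]; exact hmid b hb _ b' hb'
        | zero => rw [mul_zero]; exact B.zero_mem
        | add u v _ _ hu hv => rw [mul_add]; exact B.add_mem hu hv
        | smul c u _ hu => rw [mul_smul_comm]; exact B.smul_mem c hu
      | zero => intro y _; rw [zero_mul]; exact B.zero_mem
      | add u v _ _ hu hv => intro y hy; rw [add_mul]; exact B.add_mem (hu y hy) (hv y hy)
      | smul c u _ hu => intro y hy; rw [smul_mul_assoc]; exact B.smul_mem c (hu y hy)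
    · -- B ≤ 𝓡 ⊓ 𝓛
      intro b hb
      exact ⟨by simpa using hgenR b hb 1, by simpa using hgenL 1 b hb⟩
  · rintro ⟨𝓛, 𝓡, hL, hR, hLR, hRL, hBsub⟩
    have hBL' : ∀ b ∈ B, b ∈ 𝓛 := fun b hb => (hBsub hb).2
    have hBR : ∀ b ∈ B, b ∈ 𝓡 := fun b hb => (hBsub hb).1
    have hsq : ∀ b ∈ B, ∀ b' ∈ B, b * b' = 0 := fun b hb b' hb' =>
      hLR b (hBL' b hb) b' (hBR b' hb')
    have hmid : ∀ b ∈ B, ∀ x : A, ∀ b' ∈ B, b * x * b' ∈ B := by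
      intro b hb x b' hb'
      rw [mul_assoc]
      exact hRL b (hBR b hb) _ (hL x b' (hBL' b' hb'))
    refine ⟨⟨hBL, ?_⟩, hsq, hmid⟩
    intro b hb b' hb' x _
    have key : ⁅b, ⁅b', x⁆⁆ = b * b' * x - b * x * b' - b' * x * b + x * (b' * b) := by
      simp only [Ring.lie_def]; noncomm_ring
    rw [key, hsq b hb b' hb', hsq b' hb' b hb, zero_mul, mul_zero, zero_sub, add_zero]
    exact B.sub_mem (B.neg_mem (hmid b hb x b' hb')) (hmid b' hb' x b hb)

end Paper
end

section
/- Let A be a finite-dimensional associative algebra over a field. (i) If P and Q are 1-perfect two-sided ideals of A, then P + Q is a 1-perfect ideal of A. (ii) If P is a 1-perfect ideal of A and Q is a 1-perfect ideal of the quotient algebra A/P, then the full preimage of Q in A is a 1-perfect ideal of A. -/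
namespace Paper

variable (F A : Type*)

section
variable {F A : Type*} [Field F] [NonUnitalRing A] [Module F A]
  [SMulCommClass F A A] [IsScalarTower F A A]

/-- `J` is a two-sided ideal of the (possibly non-unital) algebra with carrier `P`
(for `P = ⊤`, a two-sided ideal of `A`). -/
def IsIdealIn (P J : Submodule F A) : Prop :=
  J ≤ P ∧ ∀ p ∈ P, ∀ x ∈ J, p * x ∈ J ∧ x * p ∈ J

/-- The (possibly non-unital) algebra with carrier `P` is 1-perfect: it has no
two-sided ideals of codimension 1. -/
def IsOnePerfectIn (P : Submodule F A) : Prop :=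
  ¬ ∃ J : Submodule F A, IsIdealIn P J ∧
      Module.finrank F P = Module.finrank F J + 1

end

section
variable {F A : Type*} [Field F] [NonUnitalRing A] [Module F A]
  [SMulCommClass F A A] [IsScalarTower F A A] [FiniteDimensional F A]

lemma key_le {P M J : Submodule F A}
    (hPA : IsIdealIn (⊤ : Submodule F A) P) (hP : IsOnePerfectIn P)
    (hPM : P ≤ M) (hJ : IsIdealIn M J)
    (hcod : Module.finrank F M = Module.finrank F J + 1) : P ≤ J := by
  by_contra h
  apply hP
  refine ⟨J ⊓ P, ⟨inf_le_right, ?_⟩, ?_⟩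
  · intro p hp x hx
    have hx' : x ∈ J := hx.1
    have hxP : x ∈ P := hx.2
    have h1 := hJ.2 p (hPM hp) x hx'
    have h2 := hPA.2 p trivial x hxP
    have h3 := hPA.2 x trivial p hp
    exact ⟨⟨h1.1, h3.2⟩, ⟨h1.2, h3.1⟩⟩
  · -- finrank P = finrank (J ⊓ P) + 1
    have hJlt : J < J ⊔ P := left_lt_sup.mpr h
    have hle : J ⊔ P ≤ M := sup_le hJ.1 hPM
    have h1 : Module.finrank F J < Module.finrank F ↥(J ⊔ P) :=
      Submodule.finrank_lt_finrank_of_lt hJlt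
    have h2 : Module.finrank F ↥(J ⊔ P) ≤ Module.finrank F M :=
      Submodule.finrank_mono hle
    have hsup : Module.finrank F ↥(J ⊔ P) = Module.finrank F J + 1 := by omega
    have hkey := Submodule.finrank_sup_add_finrank_inf_eq J P
    omega

end

/-- **Lemma.** Let `A` be a finite-dimensional associative algebra over a field.
(i) The sum of 1-perfect two-sided ideals of `A` is a 1-perfect ideal of `A`.
(ii) If `P` is a 1-perfect ideal of `A` and `Q` is a 1-perfect ideal of `A/P`
(encoded by its full preimage `Q'` in `A`, so that `P ≤ Q'`, `Q'` is an ideal of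
`A`, and `Q'/P` has no ideals of codimension 1), then the full preimage `Q'` of `Q`
in `A` is a 1-perfect ideal of `A`. -/
theorem one_perfect_ideals (F A : Type*) [Field F] [NonUnitalRing A] [Module F A]
    [SMulCommClass F A A] [IsScalarTower F A A] [FiniteDimensional F A] :
    (∀ P Q : Submodule F A,
      IsIdealIn (⊤ : Submodule F A) P → IsIdealIn (⊤ : Submodule F A) Q →
      IsOnePerfectIn P → IsOnePerfectIn Q →
      IsIdealIn (⊤ : Submodule F A) (P ⊔ Q) ∧ IsOnePerfectIn (P ⊔ Q)) ∧
    (∀ P Q' : Submodule F A,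
      IsIdealIn (⊤ : Submodule F A) P → IsOnePerfectIn P →
      P ≤ Q' → IsIdealIn (⊤ : Submodule F A) Q' →
      (¬ ∃ J : Submodule F A, IsIdealIn Q' J ∧ P ≤ J ∧
        Module.finrank F Q' = Module.finrank F J + 1) →
      IsIdealIn (⊤ : Submodule F A) Q' ∧ IsOnePerfectIn Q') := by
  constructor
  · intro P Q hPA hQA hP hQ
    have hideal : IsIdealIn (⊤ : Submodule F A) (P ⊔ Q) := by
      refine ⟨le_top, ?_⟩
      intro p _ x hx
      obtain ⟨y, hy, z, hz, rfl⟩ := Submodule.mem_sup.mp hx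
      rw [mul_add, add_mul]
      exact ⟨Submodule.add_mem _ (Submodule.mem_sup_left (hPA.2 p trivial y hy).1)
          (Submodule.mem_sup_right (hQA.2 p trivial z hz).1),
        Submodule.add_mem _ (Submodule.mem_sup_left (hPA.2 p trivial y hy).2)
          (Submodule.mem_sup_right (hQA.2 p trivial z hz).2)⟩
    refine ⟨hideal, ?_⟩
    rintro ⟨J, hJ, hcod⟩
    have hPJ : P ≤ J := key_le hPA hP le_sup_left hJ hcod
    have hQJ : Q ≤ J := key_le hQA hQ le_sup_right hJ hcod
    have : P ⊔ Q ≤ J := sup_le hPJ hQJ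
    have := Submodule.finrank_mono this
    omega
  · intro P Q' hPA hP hPQ hQ'A hno
    refine ⟨hQ'A, ?_⟩
    rintro ⟨J, hJ, hcod⟩
    exact hno ⟨J, hJ, key_le hPA hP hPQ hJ hcod, hcod⟩

end Paper
end
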